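/- The boundarization of Sergeev's electrical tetrahedron map R(λ) is J(λ)(x₁,x₂,x₃,x₄) = (x₁x₂²x₃/y₁, y₁/y₂, y₂²/y₁, x₂x₃x₄/y₂), where y₁ = x₁(x₂+x₄)(x₂+x₄+2λx₂x₃x₄)+x₃x₄² and y₂ = x₁(x₂+x₄+2λx₂x₃x₄)+x₃x₄; that is, the tetrahedral composite T(λ) = R(λ)₂₄₅R(λ)₁₃₅R(λ)₁₂₆R(λ)₃₄₆ satisfies T(λ)(x₁,x₂,x₂,x₃,x₄,x₄) = (z₁,z₂,z₂,z₃,z₄,z₄) with (z₁,z₂,z₃,z₄) = J(λ)(x₁,x₂,x₃,x₄). -/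
import Mathlib


def lift3 {X : Type*} {n : ℕ} (R : X × X × X → X × X × X) (i j k : Fin n)
    (v : Fin n → X) : Fin n → X := fun t =>
  if t = i then (R (v i, v j, v k)).1
  else if t = j then (R (v i, v j, v k)).2.1
  else if t = k then (R (v i, v j, v k)).2.2
  else v t

def Dden (l : ℂ) (p : ℂ × ℂ × ℂ) : ℂ := p.1 + p.2.2 + l * p.1 * p.2.1 * p.2.2

noncomputable def Relec (l : ℂ) (p : ℂ × ℂ × ℂ) : ℂ × ℂ × ℂ :=
  (p.1 * p.2.1 / Dden l p, Dden l p, p.2.1 * p.2.2 / Dden l p)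

def y1den (l : ℂ) (p : ℂ × ℂ × ℂ × ℂ) : ℂ :=
  p.1 * (p.2.1 + p.2.2.2) * (p.2.1 + p.2.2.2 + 2 * l * p.2.1 * p.2.2.1 * p.2.2.2)
    + p.2.2.1 * p.2.2.2 ^ 2

def y2den (l : ℂ) (p : ℂ × ℂ × ℂ × ℂ) : ℂ :=
  p.1 * (p.2.1 + p.2.2.2 + 2 * l * p.2.1 * p.2.2.1 * p.2.2.2) + p.2.2.1 * p.2.2.2

/-- The boundarization `J(λ)` of Sergeev's electrical solution. -/
noncomputable def Jelec (l : ℂ) (p : ℂ × ℂ × ℂ × ℂ) : ℂ × ℂ × ℂ × ℂ :=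
  (p.1 * p.2.1 ^ 2 * p.2.2.1 / y1den l p, y1den l p / y2den l p,
   y2den l p ^ 2 / y1den l p, p.2.1 * p.2.2.1 * p.2.2.2 / y2den l p)

-- intermediate states of the tetrahedral composite T(λ) = R(λ)₂₄₅R(λ)₁₃₅R(λ)₁₂₆R(λ)₃₄₆
noncomputable def L1 (l : ℂ) (v : Fin 6 → ℂ) : Fin 6 → ℂ := lift3 (Relec l) 2 3 5 v
noncomputable def L2 (l : ℂ) (v : Fin 6 → ℂ) : Fin 6 → ℂ := lift3 (Relec l) 0 1 5 (L1 l v)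
noncomputable def L3 (l : ℂ) (v : Fin 6 → ℂ) : Fin 6 → ℂ := lift3 (Relec l) 0 2 4 (L2 l v)
noncomputable def Tel (l : ℂ) (v : Fin 6 → ℂ) : Fin 6 → ℂ := lift3 (Relec l) 1 3 4 (L3 l v)

lemma lift3_235 {X : Type*} (R : X × X × X → X × X × X) (a b c d e f : X) :
    lift3 R 2 3 5 ![a,b,c,d,e,f] =
      ![a, b, (R (c,d,f)).1, (R (c,d,f)).2.1, e, (R (c,d,f)).2.2] := by
  funext i; fin_cases i <;> rfl

lemma lift3_015 {X : Type*} (R : X × X × X → X × X × X) (a b c d e f : X) :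
    lift3 R 0 1 5 ![a,b,c,d,e,f] =
      ![(R (a,b,f)).1, (R (a,b,f)).2.1, c, d, e, (R (a,b,f)).2.2] := by
  funext i; fin_cases i <;> rfl

lemma lift3_024 {X : Type*} (R : X × X × X → X × X × X) (a b c d e f : X) :
    lift3 R 0 2 4 ![a,b,c,d,e,f] =
      ![(R (a,c,e)).1, b, (R (a,c,e)).2.1, d, (R (a,c,e)).2.2, f] := by
  funext i; fin_cases i <;> rfl

lemma lift3_134 {X : Type*} (R : X × X × X → X × X × X) (a b c d e f : X) :
    lift3 R 1 3 4 ![a,b,c,d,e,f] =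
      ![a, (R (b,d,e)).1, c, (R (b,d,e)).2.1, (R (b,d,e)).2.2, f] := by
  funext i; fin_cases i <;> rfl

/-- The boundarization of `R(λ)` equals `J(λ)`:
`T(λ)(x₁,x₂,x₂,x₃,x₄,x₄) = (z₁,z₂,z₂,z₃,z₄,z₄)` with `(z₁,z₂,z₃,z₄) = J(λ)(x₁,x₂,x₃,x₄)`,
at generic points where all denominators are nonzero. -/
theorem boundarization_eq_Jelec (l : ℂ) (x₁ x₂ x₃ x₄ : ℂ)
    (v : Fin 6 → ℂ) (hv : v = ![x₁, x₂, x₂, x₃, x₄, x₄])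
    (hL1 : Dden l (v 2, v 3, v 5) ≠ 0)
    (hL2 : Dden l (L1 l v 0, L1 l v 1, L1 l v 5) ≠ 0)
    (hL3 : Dden l (L2 l v 0, L2 l v 2, L2 l v 4) ≠ 0)
    (hL4 : Dden l (L3 l v 1, L3 l v 3, L3 l v 4) ≠ 0)
    (hy1 : y1den l (x₁, x₂, x₃, x₄) ≠ 0) (hy2 : y2den l (x₁, x₂, x₃, x₄) ≠ 0) :
    Tel l v =
      ![(Jelec l (x₁, x₂, x₃, x₄)).1, (Jelec l (x₁, x₂, x₃, x₄)).2.1,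
        (Jelec l (x₁, x₂, x₃, x₄)).2.1, (Jelec l (x₁, x₂, x₃, x₄)).2.2.1,
        (Jelec l (x₁, x₂, x₃, x₄)).2.2.2, (Jelec l (x₁, x₂, x₃, x₄)).2.2.2] := by
  subst hv
  simp only [y1den, y2den] at hy1 hy2
  obtain ⟨D1, hD1def⟩ : ∃ d : ℂ, x₂ + x₄ + l * x₂ * x₃ * x₄ = d := ⟨_, rfl⟩
  obtain ⟨y1, hy1def⟩ : ∃ d : ℂ,
      x₁ * (x₂ + x₄) * (x₂ + x₄ + 2 * l * x₂ * x₃ * x₄) + x₃ * x₄ ^ 2 = d := ⟨_, rfl⟩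
  obtain ⟨y2, hy2def⟩ : ∃ d : ℂ,
      x₁ * (x₂ + x₄ + 2 * l * x₂ * x₃ * x₄) + x₃ * x₄ = d := ⟨_, rfl⟩
  have hD1 : D1 ≠ 0 := by rw [← hD1def]; simpa [Dden] using hL1
  have hy1N : y1 ≠ 0 := by rw [← hy1def]; exact hy1
  have hy2N : y2 ≠ 0 := by rw [← hy2def]; exact hy2
  have hR1 : Relec l (x₂, x₃, x₄) = (x₂ * x₃ / D1, D1, x₃ * x₄ / D1) := by
    simp only [Relec, Dden]; rw [hD1def]
  have hR2 : Relec l (x₁, x₂, x₃ * x₄ / D1) =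
      (x₁ * x₂ * D1 / y2, y2 / D1, x₂ * x₃ * x₄ / y2) := by
    have hd : Dden l (x₁, x₂, x₃ * x₄ / D1) = y2 / D1 := by
      simp only [Dden]
      field_simp
      rw [← hD1def, ← hy2def]; ring
    simp only [Relec, hd, Prod.mk.injEq]
    refine ⟨?_, by trivial, ?_⟩
    · field_simp
    · field_simp
      try ring
  have hR3 : Relec l (x₁ * x₂ * D1 / y2, x₂ * x₃ / D1, x₄) =
      (x₁ * x₂ ^ 2 * x₃ / y1, y1 / y2, x₂ * x₃ * x₄ * y2 / (D1 * y1)) := by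
    have hd : Dden l (x₁ * x₂ * D1 / y2, x₂ * x₃ / D1, x₄) = y1 / y2 := by
      simp only [Dden]
      field_simp
      rw [← hD1def, ← hy1def, ← hy2def]; ring
    simp only [Relec, hd, Prod.mk.injEq]
    refine ⟨?_, by trivial, ?_⟩
    · field_simp
      try ring
    · field_simp
      try ring
  have hR4 : Relec l (y2 / D1, D1, x₂ * x₃ * x₄ * y2 / (D1 * y1)) =
      (y1 / y2, y2 ^ 2 / y1, x₂ * x₃ * x₄ / y2) := by
    have hd : Dden l (y2 / D1, D1, x₂ * x₃ * x₄ * y2 / (D1 * y1)) = y2 ^ 2 / y1 := by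
      simp only [Dden]
      field_simp
      rw [← hD1def, ← hy1def, ← hy2def]; ring
    simp only [Relec, hd, Prod.mk.injEq]
    refine ⟨?_, by trivial, ?_⟩
    · field_simp
      try ring
    · field_simp
      try ring
  have e1 : L1 l ![x₁, x₂, x₂, x₃, x₄, x₄] =
      ![x₁, x₂, x₂ * x₃ / D1, D1, x₄, x₃ * x₄ / D1] := by
    simp only [L1, lift3_235, hR1]
  have e2 : L2 l ![x₁, x₂, x₂, x₃, x₄, x₄] =
      ![x₁ * x₂ * D1 / y2, y2 / D1, x₂ * x₃ / D1, D1, x₄, x₂ * x₃ * x₄ / y2] := by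
    simp only [L2, e1, lift3_015, hR2]
  have e3 : L3 l ![x₁, x₂, x₂, x₃, x₄, x₄] =
      ![x₁ * x₂ ^ 2 * x₃ / y1, y2 / D1, y1 / y2, D1, x₂ * x₃ * x₄ * y2 / (D1 * y1),
        x₂ * x₃ * x₄ / y2] := by
    simp only [L3, e2, lift3_024, hR3]
  have e4 : Tel l ![x₁, x₂, x₂, x₃, x₄, x₄] =
      ![x₁ * x₂ ^ 2 * x₃ / y1, y1 / y2, y1 / y2, y2 ^ 2 / y1, x₂ * x₃ * x₄ / y2,
        x₂ * x₃ * x₄ / y2] := by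
    simp only [Tel, e3, lift3_134, hR4]
  rw [e4]
  simp only [Jelec, y1den, y2den, hy1def, hy2def]
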